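/- (False negative for a non-Markovian spin–spin dynamics) Consider the unital dynamics T(t) = diag(cos ωt, cos ωt, 1) with ω = 5/4, and take the antipodal pair r₁ = (1,0,0), r₂ = (-1,0,0) with bias p = 1/4, q = 3/4. The generalized trace distance of the evolved pair is D(t) = max(‖T(t)(p r₁ - q r₂)‖, |p-q|) = max(|cos ωt|, 1/2), and there exists a nondegenerate interval [a,b] ⊆ [0,∞) (e.g. any interval on which |cos ωt| < 1/2) such that D is constant, equal to 1/2, on [a,b], while the evolved Bloch vector t ↦ T(t)r₁ is non-constant on [a,b]. -/

import Mathlib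

/-!
Since `p r₁ - q r₂ = r₁` is a unit vector in the equatorial plane, the first term of the
generalized trace distance is `|cos ωt|`. The bias term `|p - q| = 1/2` dominates it whenever
`ωt ∈ [π/3, 2π/3]`, while on that interval `cos ωt`, and with it `T(t) r₁`, still moves from
`1/2` to `-1/2`.
-/

noncomputable section

/-- The action of a qubit dynamical map, given by a real 3×3 matrix,
on Bloch vectors in ℝ³. -/
def act (T : Matrix (Fin 3) (Fin 3) ℝ) (r : EuclideanSpace ℝ (Fin 3)) :
    EuclideanSpace ℝ (Fin 3) :=
  WithLp.toLp 2 (T.mulVec r)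

/-- The spin–spin dynamical map T(t) = diag(cos ωt, cos ωt, 1). -/
def Tss (ω t : ℝ) : Matrix (Fin 3) (Fin 3) ℝ :=
  Matrix.diagonal ![Real.cos (ω * t), Real.cos (ω * t), 1]

open Real

lemma act_Tss_apply (ω t : ℝ) (r : EuclideanSpace ℝ (Fin 3)) (i : Fin 3) :
    act (Tss ω t) r i = ![cos (ω * t), cos (ω * t), 1] i * r i := by
  simp [act, Tss, Matrix.mulVec_diagonal]

lemma norm_act_Tss_of_apply_two_eq_zero (ω t : ℝ) {r : EuclideanSpace ℝ (Fin 3)}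
    (hr : r 2 = 0) : ‖act (Tss ω t) r‖ = |cos (ω * t)| * ‖r‖ := by
  simp only [EuclideanSpace.norm_eq, Fin.sum_univ_three, act_Tss_apply, hr, Real.norm_eq_abs,
    sq_abs]
  rw [← Real.sqrt_sq_eq_abs, ← Real.sqrt_mul (sq_nonneg _)]
  congr 1
  simp only [Matrix.cons_val_zero, Matrix.cons_val_one, mul_zero]
  ring

lemma cos_eq_of_act_Tss_eq {ω t₁ t₂ : ℝ} {r : EuclideanSpace ℝ (Fin 3)} (hr : r 0 ≠ 0)
    (h : act (Tss ω t₁) r = act (Tss ω t₂) r) : cos (ω * t₁) = cos (ω * t₂) := by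
  have h₀ := congrArg (· 0) h
  simp only [act_Tss_apply] at h₀
  exact mul_right_cancel₀ hr h₀

lemma cos_le_half_of_mem_Icc {x : ℝ} (hx : x ∈ Set.Icc (π / 3) π) : cos x ≤ 1 / 2 :=
  cos_pi_div_three ▸ cos_le_cos_of_nonneg_of_le_pi (by positivity) hx.2 hx.1

lemma abs_cos_le_half_of_mem_Icc {x : ℝ} (hx : x ∈ Set.Icc (π / 3) (π - π / 3)) :
    |cos x| ≤ 1 / 2 := by
  have hπ := pi_pos
  have hcos : cos x ≤ 1 / 2 := cos_le_half_of_mem_Icc ⟨hx.1, by linarith [hx.2]⟩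
  have hneg : -cos x ≤ 1 / 2 := by
    rw [← cos_pi_sub]
    exact cos_le_half_of_mem_Icc ⟨by linarith [hx.2], by linarith [hx.1]⟩
  exact abs_le.mpr ⟨by linarith, hcos⟩

/-- (False negative for a non-Markovian spin–spin dynamics.) For T(t) =
diag(cos ωt, cos ωt, 1) with ω = 5/4, the antipodal pair r₁ = (1,0,0), r₂ = (-1,0,0)
and bias p = 1/4, q = 3/4, the generalized trace distance of the evolved pair is
D(t) = max(|cos ωt|, 1/2), and there is a nondegenerate interval [a,b] ⊆ [0,∞) on which
D is constantly 1/2 while the evolved Bloch vector t ↦ T(t)r₁ is non-constant there. -/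
theorem gblp_false_negative_spin_spin :
    let ω : ℝ := 5 / 4
    let p : ℝ := 1 / 4
    let q : ℝ := 3 / 4
    let r₁ : EuclideanSpace ℝ (Fin 3) := WithLp.toLp 2 ![1, 0, 0]
    let r₂ : EuclideanSpace ℝ (Fin 3) := WithLp.toLp 2 ![-1, 0, 0]
    let D : ℝ → ℝ := fun t => max ‖act (Tss ω t) (p • r₁ - q • r₂)‖ |p - q|
    (∀ t : ℝ, D t = max |Real.cos (ω * t)| (1 / 2))
    ∧ ∃ a b : ℝ, 0 ≤ a ∧ a < b
        ∧ (∀ t ∈ Set.Icc a b, D t = 1 / 2)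
        ∧ ∃ t₁ ∈ Set.Icc a b, ∃ t₂ ∈ Set.Icc a b,
            act (Tss ω t₁) r₁ ≠ act (Tss ω t₂) r₁ := by
  intro ω p q r₁ r₂ D
  have hmix : p • r₁ - q • r₂ = r₁ := by
    ext i; fin_cases i <;> norm_num [r₁, r₂, p, q]
  have hr₁ : ‖r₁‖ = 1 := by simp [r₁, EuclideanSpace.norm_eq, Fin.sum_univ_three]
  have hD : ∀ t, D t = max |cos (ω * t)| (1 / 2) := fun t => by
    simp only [D, hmix, norm_act_Tss_of_apply_two_eq_zero ω t (show r₁ 2 = 0 from rfl), hr₁,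
      mul_one]
    norm_num [p, q]
  have hωt : ∀ t ∈ Set.Icc (4 * π / 15) (8 * π / 15), ω * t ∈ Set.Icc (π / 3) (π - π / 3) :=
    fun t ht => ⟨by linarith [ht.1], by linarith [ht.2]⟩
  have hab : 4 * π / 15 < 8 * π / 15 := by linarith [pi_pos]
  refine ⟨hD, 4 * π / 15, 8 * π / 15, by positivity, hab, fun t ht => ?_,
    4 * π / 15, ⟨le_rfl, hab.le⟩, 8 * π / 15, ⟨hab.le, le_rfl⟩, fun h => ?_⟩
  · rw [hD t, max_eq_right (abs_cos_le_half_of_mem_Icc (hωt t ht))]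
  · have hcos := cos_eq_of_act_Tss_eq (by norm_num [r₁]) h
    rw [show ω * (4 * π / 15) = π / 3 by ring, show ω * (8 * π / 15) = π - π / 3 by ring,
      cos_pi_sub, cos_pi_div_three] at hcos
    norm_num at hcos
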